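/- arXiv:2403.05204 — 8 statements merged into one kernel-verified Lean document; each statement's English description precedes it below -/
import Mathlib

section
/- Let A be a real L×N matrix with full row rank and L₂ a real M₂×N matrix such that the orthogonal complement of ker A is invariant under L₂ᵀL₂ (i.e., x ∈ (ker A)ᗮ implies L₂ᵀL₂x ∈ (ker A)ᗮ). Define Λ₂ = (AAᵀ)⁻¹ A L₂ᵀL₂ Aᵀ. Then Aᵀ Λ₂ = L₂ᵀL₂ Aᵀ. -/
open Matrix

/-- If `A` has full row rank (`AAᵀ` invertible) and `(ker A)ᗮ` is
invariant under `L₂ᵀL₂`, then with `Λ₂ = (AAᵀ)⁻¹ A L₂ᵀL₂ Aᵀ` one has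
`Aᵀ Λ₂ = L₂ᵀ L₂ Aᵀ`. Membership in `(ker A)ᗮ` is expressed through the dot product:
`x ∈ (ker A)ᗮ ↔ ∀ z, A z = 0 → ⟪x, z⟫ = 0`. -/
theorem stmt2 {L N M₂ : ℕ} (A : Matrix (Fin L) (Fin N) ℝ) (L₂ : Matrix (Fin M₂) (Fin N) ℝ)
    (hA : IsUnit (A * Aᵀ))
    (hinv : ∀ x : Fin N → ℝ,
      (∀ z : Fin N → ℝ, A.mulVec z = 0 → x ⬝ᵥ z = 0) →
      (∀ z : Fin N → ℝ, A.mulVec z = 0 → ((L₂ᵀ * L₂).mulVec x) ⬝ᵥ z = 0)) :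
    Aᵀ * ((A * Aᵀ)⁻¹ * (A * L₂ᵀ * L₂ * Aᵀ)) = L₂ᵀ * L₂ * Aᵀ := by
  have hdet : IsUnit (A * Aᵀ).det := (Matrix.isUnit_iff_isUnit_det _).mp hA
  have hinvmul : (A * Aᵀ) * (A * Aᵀ)⁻¹ = 1 := Matrix.mul_nonsing_inv _ hdet
  apply Matrix.toLin'.injective
  apply LinearMap.ext
  intro y
  simp only [Matrix.toLin'_apply]
  set x : Fin N → ℝ := Aᵀ.mulVec y with hxdef
  have hx : ∀ z : Fin N → ℝ, A.mulVec z = 0 → x ⬝ᵥ z = 0 := by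
    intro z hz
    have : x ⬝ᵥ z = y ⬝ᵥ A.mulVec z := by
      rw [hxdef, Matrix.mulVec_transpose, Matrix.dotProduct_mulVec]
    rw [this, hz, dotProduct_zero]
  set w : Fin N → ℝ := (L₂ᵀ * L₂).mulVec x with hwdef
  have hw : ∀ z : Fin N → ℝ, A.mulVec z = 0 → w ⬝ᵥ z = 0 := hinv x hx
  set P : Matrix (Fin N) (Fin N) ℝ := Aᵀ * (A * Aᵀ)⁻¹ * A with hPdef
  have hAP : ∀ v : Fin N → ℝ, A.mulVec (P.mulVec v) = A.mulVec v := by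
    intro v
    simp only [Matrix.mulVec_mulVec]
    have hAPm : A * P = A := by
      rw [hPdef]
      simp only [← Matrix.mul_assoc]
      rw [hinvmul, Matrix.one_mul]
    rw [hAPm]
  set u : Fin N → ℝ := w - P.mulVec w with hudef
  have hAu : A.mulVec u = 0 := by
    rw [hudef, Matrix.mulVec_sub, hAP, sub_self]
  have hPw_perp : P.mulVec w ⬝ᵥ u = 0 := by
    have : P.mulVec w ⬝ᵥ u = (((A * Aᵀ)⁻¹ * A).mulVec w) ⬝ᵥ A.mulVec u := by
      rw [hPdef, Matrix.mul_assoc, ← Matrix.mulVec_mulVec, Matrix.mulVec_transpose,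
        ← Matrix.dotProduct_mulVec]
    rw [this, hAu, dotProduct_zero]
  have huu : u ⬝ᵥ u = 0 := by
    have h1 : w ⬝ᵥ u = 0 := hw u hAu
    calc u ⬝ᵥ u = w ⬝ᵥ u - P.mulVec w ⬝ᵥ u := by rw [hudef, sub_dotProduct]
    _ = 0 := by rw [h1, hPw_perp, sub_zero]
  have hu0 : u = 0 := by
    have := dotProduct_self_eq_zero.mp huu
    exact this
  have hkey : P.mulVec w = w := (sub_eq_zero.mp hu0).symm
  have hrw : (Aᵀ * ((A * Aᵀ)⁻¹ * (A * L₂ᵀ * L₂ * Aᵀ))).mulVec y = P.mulVec w := by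
    rw [hwdef, hxdef, Matrix.mulVec_mulVec, Matrix.mulVec_mulVec, hPdef]
    simp only [Matrix.mul_assoc]
  have hrw2 : (L₂ᵀ * L₂ * Aᵀ).mulVec y = w := by
    rw [hwdef, hxdef, Matrix.mulVec_mulVec]
  rw [hrw, hrw2, hkey]
end

section
/- Let A be a real L×N matrix with full row rank, L₂ a real M₂×N matrix such that the orthogonal complement of ker A is invariant under L₂ᵀL₂, and λ₂ > 0. Define Λ₂ = (AAᵀ)⁻¹ A L₂ᵀL₂ Aᵀ. Then Aᵀ(AAᵀ + λ₂Λ₂) = (AᵀA + λ₂L₂ᵀL₂)Aᵀ. -/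
open Matrix

lemma proj_fix {L N : ℕ} (A : Matrix (Fin L) (Fin N) ℝ)
    (hA : IsUnit (A * Aᵀ)) (x : Fin N → ℝ)
    (hx : ∀ z : Fin N → ℝ, A.mulVec z = 0 → x ⬝ᵥ z = 0) :
    Aᵀ.mulVec ((A * Aᵀ)⁻¹.mulVec (A.mulVec x)) = x := by
  have hdet : IsUnit (A * Aᵀ).det := (Matrix.isUnit_iff_isUnit_det _).mp hA
  set u := (A * Aᵀ)⁻¹.mulVec (A.mulVec x) with hu
  set y := Aᵀ.mulVec u with hy
  have hker : A.mulVec (y - x) = 0 := by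
    have h1 : A.mulVec y = A.mulVec x := by
      rw [hy, hu, Matrix.mulVec_mulVec, Matrix.mulVec_mulVec,
        Matrix.mul_nonsing_inv _ hdet, Matrix.one_mulVec]
    rw [Matrix.mulVec_sub, h1, sub_self]
  have hyd : y ⬝ᵥ (y - x) = 0 := by
    have h2 : y ⬝ᵥ (y - x) = u ⬝ᵥ A.mulVec (y - x) := by
      rw [Matrix.dotProduct_mulVec, hy, Matrix.mulVec_transpose]
    rw [h2, hker, dotProduct_zero]
  have hxd : x ⬝ᵥ (y - x) = 0 := hx _ hker
  have hdd : (y - x) ⬝ᵥ (y - x) = 0 := by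
    rw [sub_dotProduct, hyd, hxd, sub_self]
  exact sub_eq_zero.mp (dotProduct_self_eq_zero.mp hdd)

/-- Under full row rank of `A` and invariance of `(ker A)ᗮ` under `L₂ᵀL₂`,
with `Λ₂ = (AAᵀ)⁻¹ A L₂ᵀL₂ Aᵀ` one has `Aᵀ(AAᵀ + λ₂Λ₂) = (AᵀA + λ₂L₂ᵀL₂)Aᵀ`. -/
theorem stmt3 {L N M₂ : ℕ} (A : Matrix (Fin L) (Fin N) ℝ) (L₂ : Matrix (Fin M₂) (Fin N) ℝ)
    (lam₂ : ℝ) (hlam₂ : 0 < lam₂)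
    (hA : IsUnit (A * Aᵀ))
    (hinv : ∀ x : Fin N → ℝ,
      (∀ z : Fin N → ℝ, A.mulVec z = 0 → x ⬝ᵥ z = 0) →
      (∀ z : Fin N → ℝ, A.mulVec z = 0 → ((L₂ᵀ * L₂).mulVec x) ⬝ᵥ z = 0)) :
    Aᵀ * (A * Aᵀ + lam₂ • ((A * Aᵀ)⁻¹ * (A * L₂ᵀ * L₂ * Aᵀ))) =
      (Aᵀ * A + lam₂ • (L₂ᵀ * L₂)) * Aᵀ := by
  have key : Aᵀ * ((A * Aᵀ)⁻¹ * (A * L₂ᵀ * L₂ * Aᵀ)) = L₂ᵀ * L₂ * Aᵀ := by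
    have hcol : ∀ j : Fin L,
        (Aᵀ * ((A * Aᵀ)⁻¹ * (A * L₂ᵀ * L₂ * Aᵀ))) *ᵥ Pi.single j 1
          = (L₂ᵀ * L₂ * Aᵀ) *ᵥ Pi.single j 1 := by
      intro j
      have hx : ∀ z : Fin N → ℝ, A.mulVec z = 0 → (Aᵀᵀ j) ⬝ᵥ z = 0 := by
        intro z hz
        have : (Aᵀᵀ j) ⬝ᵥ z = A.mulVec z j := rfl
        rw [this, hz]; rfl
      have hfix := proj_fix A hA ((L₂ᵀ * L₂).mulVec (Aᵀᵀ j)) (hinv _ hx)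
      simp only [← Matrix.mulVec_mulVec] at hfix ⊢
      simp only [Matrix.mulVec_single_one]
      exact hfix
    ext i j
    have h1 := congrFun (hcol j) i
    rwa [Matrix.mulVec_single_one, Matrix.mulVec_single_one] at h1
  rw [Matrix.mul_add, Matrix.add_mul, Matrix.mul_smul, Matrix.smul_mul, key,
    ← Matrix.mul_assoc, Matrix.mul_assoc (L₂ᵀ) L₂ Aᵀ, ← Matrix.mul_assoc (L₂ᵀ)]
end

section
/- Let A be a real L×N matrix with full row rank, L₂ a real M₂×N matrix such that ker A ∩ ker L₂ = {0} and the orthogonal complement of ker A is invariant under L₂ᵀL₂, and λ₂ > 0. Define Λ₂ = (AAᵀ)⁻¹ A L₂ᵀL₂ Aᵀ. Then both AᵀA + λ₂L₂ᵀL₂ and AAᵀ + λ₂Λ₂ are invertible and (AᵀA + λ₂L₂ᵀL₂)⁻¹ Aᵀ = Aᵀ (AAᵀ + λ₂Λ₂)⁻¹. -/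
open Matrix

private lemma matrix_eq_of_mulVec {n m : ℕ} {M₁ M₂ : Matrix (Fin n) (Fin m) ℝ}
    (h : ∀ v, M₁.mulVec v = M₂.mulVec v) : M₁ = M₂ := by
  ext i j
  have := congrFun (h (Pi.single j 1)) i
  simpa [Matrix.mulVec_single] using this

/-- Lemma 1 of the paper. Under Assumptions 1–3, both
`AᵀA + λ₂L₂ᵀL₂` and `AAᵀ + λ₂Λ₂` are invertible and
`(AᵀA + λ₂L₂ᵀL₂)⁻¹ Aᵀ = Aᵀ (AAᵀ + λ₂Λ₂)⁻¹`, where `Λ₂ = (AAᵀ)⁻¹ A L₂ᵀL₂ Aᵀ`. -/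
theorem stmt4 {L N M₂ : ℕ} (A : Matrix (Fin L) (Fin N) ℝ) (L₂ : Matrix (Fin M₂) (Fin N) ℝ)
    (lam₂ : ℝ) (hlam₂ : 0 < lam₂)
    (hA : IsUnit (A * Aᵀ))
    (hker : ∀ x : Fin N → ℝ, A.mulVec x = 0 → L₂.mulVec x = 0 → x = 0)
    (hinv : ∀ x : Fin N → ℝ,
      (∀ z : Fin N → ℝ, A.mulVec z = 0 → x ⬝ᵥ z = 0) →
      (∀ z : Fin N → ℝ, A.mulVec z = 0 → ((L₂ᵀ * L₂).mulVec x) ⬝ᵥ z = 0)) :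
    IsUnit (Aᵀ * A + lam₂ • (L₂ᵀ * L₂)) ∧
    IsUnit (A * Aᵀ + lam₂ • ((A * Aᵀ)⁻¹ * (A * L₂ᵀ * L₂ * Aᵀ))) ∧
    (Aᵀ * A + lam₂ • (L₂ᵀ * L₂))⁻¹ * Aᵀ =
      Aᵀ * (A * Aᵀ + lam₂ • ((A * Aᵀ)⁻¹ * (A * L₂ᵀ * L₂ * Aᵀ)))⁻¹ := by
  have hAdet : IsUnit (A * Aᵀ).det := (Matrix.isUnit_iff_isUnit_det _).mp hA
  have hGinv : (A * Aᵀ) * (A * Aᵀ)⁻¹ = 1 := Matrix.mul_nonsing_inv _ hAdet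
  set S : Matrix (Fin N) (Fin N) ℝ := L₂ᵀ * L₂ with hSdef
  set B : Matrix (Fin N) (Fin N) ℝ := Aᵀ * A + lam₂ • S with hBdef
  set C : Matrix (Fin L) (Fin L) ℝ :=
    A * Aᵀ + lam₂ • ((A * Aᵀ)⁻¹ * (A * L₂ᵀ * L₂ * Aᵀ)) with hCdef
  -- Key projection identity: S * Aᵀ = Aᵀ * ((A*Aᵀ)⁻¹ * (A * S * Aᵀ))
  have hkey : S * Aᵀ = Aᵀ * ((A * Aᵀ)⁻¹ * (A * L₂ᵀ * L₂ * Aᵀ)) := by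
    apply matrix_eq_of_mulVec
    intro v
    set x : Fin N → ℝ := Aᵀ.mulVec v with hx
    have hxperp : ∀ z : Fin N → ℝ, A.mulVec z = 0 → x ⬝ᵥ z = 0 := by
      intro z hz
      rw [hx, Matrix.mulVec_transpose, ← Matrix.dotProduct_mulVec, hz, dotProduct_zero]
    set y : Fin N → ℝ := S.mulVec x with hy
    set w : Fin N → ℝ := y - Aᵀ.mulVec ((A * Aᵀ)⁻¹.mulVec (A.mulVec y)) with hw
    have hproj : ∀ u : Fin L → ℝ, A.mulVec (Aᵀ.mulVec ((A * Aᵀ)⁻¹.mulVec u)) = u := by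
      intro u
      rw [Matrix.mulVec_mulVec, Matrix.mulVec_mulVec, hGinv,
        Matrix.one_mulVec]
    have hAw : A.mulVec w = 0 := by
      rw [hw, Matrix.mulVec_sub, hproj (A.mulVec y), sub_self]
    have h1 : y ⬝ᵥ w = 0 := hinv x hxperp w hAw
    have h2 : (Aᵀ.mulVec ((A * Aᵀ)⁻¹.mulVec (A.mulVec y))) ⬝ᵥ w = 0 := by
      rw [Matrix.mulVec_transpose, ← Matrix.dotProduct_mulVec, hAw, dotProduct_zero]
    have h3 : w ⬝ᵥ w = 0 := by
      have : w ⬝ᵥ w = y ⬝ᵥ w - (Aᵀ.mulVec ((A * Aᵀ)⁻¹.mulVec (A.mulVec y))) ⬝ᵥ w := by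
        rw [hw]; exact sub_dotProduct _ _ _
      rw [this, h1, h2, sub_zero]
    have hw0 : w = 0 := dotProduct_self_eq_zero.mp h3
    have hyeq : y = Aᵀ.mulVec ((A * Aᵀ)⁻¹.mulVec (A.mulVec y)) := by
      have := sub_eq_zero.mp hw0
      exact this
    calc (S * Aᵀ).mulVec v = y := by rw [hy, hx, Matrix.mulVec_mulVec]
      _ = Aᵀ.mulVec ((A * Aᵀ)⁻¹.mulVec (A.mulVec y)) := hyeq
      _ = (Aᵀ * ((A * Aᵀ)⁻¹ * (A * L₂ᵀ * L₂ * Aᵀ))).mulVec v := by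
          rw [hy, hx]
          simp only [Matrix.mulVec_mulVec, Matrix.mul_assoc, hSdef]
  -- Intertwining identity: B * Aᵀ = Aᵀ * C
  have hBC : B * Aᵀ = Aᵀ * C := by
    rw [hBdef, hCdef, Matrix.add_mul, Matrix.mul_add, Matrix.smul_mul, Matrix.mul_smul, hkey,
      Matrix.mul_assoc]
  -- B is injective, hence a unit
  have hBinj : Function.Injective B.mulVec := by
    intro u v huv
    have hsub : B.mulVec (u - v) = 0 := by
      rw [Matrix.mulVec_sub, huv, sub_self]
    set d := u - v with hd
    have hdz : d = 0 := by
      have hdot : d ⬝ᵥ B.mulVec d = 0 := by rw [hsub, dotProduct_zero]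
      have hexp : d ⬝ᵥ B.mulVec d =
          (A.mulVec d) ⬝ᵥ (A.mulVec d) + lam₂ * ((L₂.mulVec d) ⬝ᵥ (L₂.mulVec d)) := by
        rw [hBdef, Matrix.add_mulVec, dotProduct_add, Matrix.smul_mulVec,
          dotProduct_smul, hSdef]
        congr 1
        · rw [← Matrix.mulVec_mulVec, Matrix.dotProduct_mulVec, Matrix.vecMul_transpose]
        · rw [smul_eq_mul, ← Matrix.mulVec_mulVec, Matrix.dotProduct_mulVec,
            Matrix.vecMul_transpose]
      have h1 : (0:ℝ) ≤ (A.mulVec d) ⬝ᵥ (A.mulVec d) := by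
        apply Finset.sum_nonneg; intro i _; exact mul_self_nonneg _
      have h2 : (0:ℝ) ≤ (L₂.mulVec d) ⬝ᵥ (L₂.mulVec d) := by
        apply Finset.sum_nonneg; intro i _; exact mul_self_nonneg _
      have hsum : (A.mulVec d) ⬝ᵥ (A.mulVec d) + lam₂ * ((L₂.mulVec d) ⬝ᵥ (L₂.mulVec d)) = 0 := by
        rw [← hexp, hdot]
      have hA0 : (A.mulVec d) ⬝ᵥ (A.mulVec d) = 0 := by nlinarith
      have hL0 : (L₂.mulVec d) ⬝ᵥ (L₂.mulVec d) = 0 := by nlinarith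
      exact hker d (dotProduct_self_eq_zero.mp hA0)
        (dotProduct_self_eq_zero.mp hL0)
    rw [hd] at hdz
    exact sub_eq_zero.mp hdz
  have hB : IsUnit B := Matrix.mulVec_injective_iff_isUnit.mp hBinj
  -- C is injective, hence a unit
  have hCinj : Function.Injective C.mulVec := by
    intro u v huv
    have hsub : C.mulVec (u - v) = 0 := by rw [Matrix.mulVec_sub, huv, sub_self]
    set d := u - v with hd
    have hAtd : Aᵀ.mulVec d = 0 := by
      have : B.mulVec (Aᵀ.mulVec d) = 0 := by
        rw [Matrix.mulVec_mulVec, hBC, ← Matrix.mulVec_mulVec, hsub, Matrix.mulVec_zero]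
      have hz : B.mulVec (Aᵀ.mulVec d) = B.mulVec 0 := by rw [this, Matrix.mulVec_zero]
      exact hBinj hz
    have hGd : (A * Aᵀ).mulVec d = 0 := by
      rw [← Matrix.mulVec_mulVec, hAtd, Matrix.mulVec_zero]
    have hdz : d = 0 := by
      have := Matrix.mulVec_injective_iff_isUnit.mpr hA
      have hz : (A * Aᵀ).mulVec d = (A * Aᵀ).mulVec 0 := by rw [hGd, Matrix.mulVec_zero]
      exact this hz
    rw [hd] at hdz
    exact sub_eq_zero.mp hdz
  have hC : IsUnit C := Matrix.mulVec_injective_iff_isUnit.mp hCinj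
  refine ⟨hB, hC, ?_⟩
  have hBdet : IsUnit B.det := (Matrix.isUnit_iff_isUnit_det _).mp hB
  have hCdet : IsUnit C.det := (Matrix.isUnit_iff_isUnit_det _).mp hC
  calc B⁻¹ * Aᵀ = B⁻¹ * Aᵀ * (C * C⁻¹) := by rw [Matrix.mul_nonsing_inv _ hCdet, Matrix.mul_one]
    _ = B⁻¹ * (Aᵀ * C) * C⁻¹ := by rw [Matrix.mul_assoc, Matrix.mul_assoc, Matrix.mul_assoc]
    _ = B⁻¹ * (B * Aᵀ) * C⁻¹ := by rw [hBC]
    _ = Aᵀ * C⁻¹ := by rw [← Matrix.mul_assoc, Matrix.nonsing_inv_mul _ hBdet, Matrix.one_mul]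
end

section
/- Let A be a real L×N matrix with full row rank, L₂ a real M₂×N matrix such that ker A ∩ ker L₂ = {0} and the orthogonal complement of ker A is invariant under L₂ᵀL₂, and λ₂ > 0. Define Λ₂ = (AAᵀ)⁻¹ A L₂ᵀL₂ Aᵀ. For any y ∈ ℝ^L and x₁ ∈ ℝ^N, setting x₂* = −(AᵀA + λ₂L₂ᵀL₂)⁻¹ Aᵀ(Ax₁ − y), one has A(x₁ + x₂*) − y = λ₂ Λ₂ (AAᵀ + λ₂Λ₂)⁻¹ (Ax₁ − y). -/
open Matrix

/-- equation (8) of the paper. Under Assumptions 1–3, with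
`Λ₂ = (AAᵀ)⁻¹ A L₂ᵀL₂ Aᵀ` and `x₂* = −(AᵀA + λ₂L₂ᵀL₂)⁻¹ Aᵀ(Ax₁ − y)`, one has
`A(x₁ + x₂*) − y = λ₂ Λ₂ (AAᵀ + λ₂Λ₂)⁻¹ (Ax₁ − y)`. -/
theorem stmt6 {L N M₂ : ℕ} (A : Matrix (Fin L) (Fin N) ℝ) (L₂ : Matrix (Fin M₂) (Fin N) ℝ)
    (lam₂ : ℝ) (hlam₂ : 0 < lam₂)
    (hA : IsUnit (A * Aᵀ))
    (hker : ∀ x : Fin N → ℝ, A.mulVec x = 0 → L₂.mulVec x = 0 → x = 0)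
    (hinv : ∀ x : Fin N → ℝ,
      (∀ z : Fin N → ℝ, A.mulVec z = 0 → x ⬝ᵥ z = 0) →
      (∀ z : Fin N → ℝ, A.mulVec z = 0 → ((L₂ᵀ * L₂).mulVec x) ⬝ᵥ z = 0))
    (y : Fin L → ℝ) (x₁ : Fin N → ℝ)
    (Λ₂ : Matrix (Fin L) (Fin L) ℝ) (hΛ₂ : Λ₂ = (A * Aᵀ)⁻¹ * (A * L₂ᵀ * L₂ * Aᵀ))
    (x₂star : Fin N → ℝ)
    (hx₂star : x₂star =
      -((Aᵀ * A + lam₂ • (L₂ᵀ * L₂))⁻¹.mulVec (Aᵀ.mulVec (A.mulVec x₁ - y)))) :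
    A.mulVec (x₁ + x₂star) - y =
      (lam₂ • Λ₂ * (A * Aᵀ + lam₂ • Λ₂)⁻¹).mulVec (A.mulVec x₁ - y) := by
  set Q : Matrix (Fin N) (Fin N) ℝ := L₂ᵀ * L₂ with hQ
  set G : Matrix (Fin L) (Fin L) ℝ := A * Aᵀ with hG
  set r : Fin L → ℝ := A.mulVec x₁ - y with hr
  set Mm : Matrix (Fin N) (Fin N) ℝ := Aᵀ * A + lam₂ • Q with hMm
  set S : Matrix (Fin L) (Fin L) ℝ := G + lam₂ • Λ₂ with hS
  have hGdet : IsUnit G.det := (Matrix.isUnit_iff_isUnit_det G).1 hA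
  -- dot product helper: (Aᵀ *ᵥ w) ⬝ᵥ z = w ⬝ᵥ (A *ᵥ z)
  have hdot : ∀ (w : Fin L → ℝ) (z : Fin N → ℝ),
      (Aᵀ.mulVec w) ⬝ᵥ z = w ⬝ᵥ (A.mulVec z) := by
    intro w z
    rw [Matrix.mulVec_transpose, Matrix.dotProduct_mulVec]
  have hdot' : ∀ (z : Fin N → ℝ) (w : Fin M₂ → ℝ),
      z ⬝ᵥ (L₂ᵀ.mulVec w) = (L₂.mulVec z) ⬝ᵥ w := by
    intro z w
    rw [Matrix.dotProduct_mulVec, Matrix.vecMul_transpose]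
  -- Key identity from the invariance assumption: Q * Aᵀ = Aᵀ * Λ₂
  have key : Q * Aᵀ = Aᵀ * Λ₂ := by
    have hcol : ∀ v : Fin L → ℝ, (Q * Aᵀ).mulVec v = (Aᵀ * Λ₂).mulVec v := by
      intro v
      set u : Fin N → ℝ := (Q * Aᵀ).mulVec v - (Aᵀ * Λ₂).mulVec v with hu
      have hmm : A * (Q * Aᵀ) = A * (Aᵀ * Λ₂) := by
        have h1 : A * (Aᵀ * Λ₂) = A * L₂ᵀ * L₂ * Aᵀ := by
          rw [hΛ₂, ← Matrix.mul_assoc, ← hG,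
            Matrix.mul_nonsing_inv_cancel_left _ _ hGdet]
        rw [h1, hQ]
        simp only [Matrix.mul_assoc]
      have hAu : A.mulVec u = 0 := by
        rw [hu, Matrix.mulVec_sub, Matrix.mulVec_mulVec, Matrix.mulVec_mulVec, hmm,
          sub_self]
      have horth : ∀ z : Fin N → ℝ, A.mulVec z = 0 → u ⬝ᵥ z = 0 := by
        intro z hz
        have h1 : ((Q * Aᵀ).mulVec v) ⬝ᵥ z = 0 := by
          rw [← Matrix.mulVec_mulVec]
          refine hinv (Aᵀ.mulVec v) ?_ z hz
          intro z' hz'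
          rw [hdot, hz', dotProduct_zero]
        have h2 : ((Aᵀ * Λ₂).mulVec v) ⬝ᵥ z = 0 := by
          rw [← Matrix.mulVec_mulVec, hdot, hz, dotProduct_zero]
        rw [hu, sub_dotProduct, h1, h2, sub_self]
      have hu0 : u = 0 := dotProduct_self_eq_zero.1 (horth u hAu)
      exact sub_eq_zero.1 hu0
    ext i j
    have := congrFun (hcol (Pi.single j 1)) i
    simpa [Matrix.mulVec_single_one] using this
  -- Mm is invertible
  have hMker : ∀ x : Fin N → ℝ, Mm.mulVec x = 0 → x = 0 := by
    intro x hx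
    have hexp : x ⬝ᵥ Mm.mulVec x
        = (A.mulVec x) ⬝ᵥ (A.mulVec x) + lam₂ * ((L₂.mulVec x) ⬝ᵥ (L₂.mulVec x)) := by
      rw [hMm, Matrix.add_mulVec, dotProduct_add, Matrix.smul_mulVec,
        dotProduct_smul]
      congr 1
      · rw [← Matrix.mulVec_mulVec, Matrix.dotProduct_mulVec, Matrix.vecMul_transpose]
      · rw [hQ, smul_eq_mul]
        congr 1
        rw [← Matrix.mulVec_mulVec, hdot']
    rw [hx, dotProduct_zero] at hexp
    have h1 : (0:ℝ) ≤ (A.mulVec x) ⬝ᵥ (A.mulVec x) :=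
      Finset.sum_nonneg fun i _ => mul_self_nonneg _
    have h2 : (0:ℝ) ≤ (L₂.mulVec x) ⬝ᵥ (L₂.mulVec x) :=
      Finset.sum_nonneg fun i _ => mul_self_nonneg _
    have hA0 : A.mulVec x = 0 := by
      apply dotProduct_self_eq_zero.1
      nlinarith
    have hL0 : L₂.mulVec x = 0 := by
      apply dotProduct_self_eq_zero.1
      nlinarith
    exact hker x hA0 hL0
  have hMinj : Function.Injective Mm.mulVec := by
    intro a b hab
    have : Mm.mulVec (a - b) = 0 := by
      rw [Matrix.mulVec_sub, hab, sub_self]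
    exact sub_eq_zero.1 (hMker _ this)
  have hMunit : IsUnit Mm := Matrix.mulVec_injective_iff_isUnit.1 hMinj
  have hMdet : IsUnit Mm.det := (Matrix.isUnit_iff_isUnit_det Mm).1 hMunit
  -- intertwining: Mm * Aᵀ = Aᵀ * S
  have comm : Mm * Aᵀ = Aᵀ * S := by
    rw [hMm, hS, Matrix.add_mul, Matrix.mul_add, Matrix.smul_mul, key, hG,
      Matrix.mul_smul, Matrix.mul_assoc]
  -- S is invertible
  have hSker : ∀ v : Fin L → ℝ, S.mulVec v = 0 → v = 0 := by
    intro v hv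
    have h1 : Mm.mulVec (Aᵀ.mulVec v) = 0 := by
      rw [Matrix.mulVec_mulVec, comm, ← Matrix.mulVec_mulVec, hv, Matrix.mulVec_zero]
    have h2 : Aᵀ.mulVec v = 0 := hMker _ h1
    have h3 : G.mulVec v = 0 := by
      rw [hG, ← Matrix.mulVec_mulVec, h2, Matrix.mulVec_zero]
    have hGinj : Function.Injective G.mulVec := Matrix.mulVec_injective_iff_isUnit.2 hA
    apply hGinj
    rw [h3, Matrix.mulVec_zero]
  have hSinj : Function.Injective S.mulVec := by
    intro a b hab
    have : S.mulVec (a - b) = 0 := by rw [Matrix.mulVec_sub, hab, sub_self]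
    exact sub_eq_zero.1 (hSker _ this)
  have hSdet : IsUnit S.det :=
    (Matrix.isUnit_iff_isUnit_det S).1 (Matrix.mulVec_injective_iff_isUnit.1 hSinj)
  -- Mm⁻¹ * Aᵀ = Aᵀ * S⁻¹
  have hinvcomm : Mm⁻¹ * Aᵀ = Aᵀ * S⁻¹ := by
    have h1 : Mm⁻¹ * (Mm * Aᵀ) = Mm⁻¹ * (Aᵀ * S) := by rw [comm]
    rw [Matrix.nonsing_inv_mul_cancel_left _ _ hMdet, ← Matrix.mul_assoc] at h1
    have h2 : Aᵀ * S⁻¹ = Mm⁻¹ * Aᵀ * S * S⁻¹ := by rw [← h1]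
    rw [Matrix.mul_nonsing_inv_cancel_right _ _ hSdet] at h2
    exact h2.symm
  -- now the final computation
  have hfin : A * Mm⁻¹ * Aᵀ = G * S⁻¹ := by
    rw [Matrix.mul_assoc, hinvcomm, ← Matrix.mul_assoc, ← hG]
  have lhs : A.mulVec (x₁ + x₂star) - y
      = r - (A * Mm⁻¹ * Aᵀ).mulVec r := by
    rw [hx₂star, Matrix.mulVec_add, Matrix.mulVec_neg, Matrix.mulVec_mulVec,
      Matrix.mulVec_mulVec, hr]
    abel
  rw [lhs, hfin]
  have hSG : lam₂ • Λ₂ = S - G := by rw [hS]; abel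
  have hmat : lam₂ • Λ₂ * S⁻¹ = 1 - G * S⁻¹ := by
    rw [hSG, Matrix.sub_mul, Matrix.mul_nonsing_inv _ hSdet]
  rw [hmat, Matrix.sub_mulVec, Matrix.one_mulVec]
end

section
/- Let A be a real L×N matrix with full row rank, L₂ a real M₂×N matrix such that ker A ∩ ker L₂ = {0} and the orthogonal complement of ker A is invariant under L₂ᵀL₂, and λ₂ > 0. Define Λ₂ = (AAᵀ)⁻¹ A L₂ᵀL₂ Aᵀ and M_{λ₂} = λ₂ Λ₂ (AAᵀ + λ₂Λ₂)⁻¹. Then for every y ∈ ℝ^L and x₁ ∈ ℝ^N, the minimum over x₂ ∈ ℝ^N of ½‖y − A(x₁ + x₂)‖₂² + (λ₂/2)‖L₂x₂‖₂² equals ½ (y − Ax₁)ᵀ M_{λ₂} (y − Ax₁). -/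
open Matrix

private theorem adjDot {m n : ℕ} (A : Matrix (Fin m) (Fin n) ℝ) (u : Fin n → ℝ) (v : Fin m → ℝ) :
    A.mulVec u ⬝ᵥ v = u ⬝ᵥ Aᵀ.mulVec v := by
  rw [mulVec_transpose, dotProduct_comm, dotProduct_mulVec, dotProduct_comm]

private theorem dotSelfNonneg {n : ℕ} (v : Fin n → ℝ) : 0 ≤ v ⬝ᵥ v :=
  Finset.sum_nonneg fun i _ => mul_self_nonneg _

private theorem subDot {n : ℕ} (u v : Fin n → ℝ) :
    (u - v) ⬝ᵥ (u - v) = u ⬝ᵥ u - 2 * (u ⬝ᵥ v) + v ⬝ᵥ v := by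
  rw [sub_dotProduct, dotProduct_sub, dotProduct_sub, dotProduct_comm v u]; ring

private theorem matExt {m n : ℕ} (M N' : Matrix (Fin m) (Fin n) ℝ)
    (h : ∀ v, M.mulVec v = N'.mulVec v) : M = N' := by
  ext i j
  have := congrFun (h (Pi.single j 1)) i
  simpa [mulVec_single_one] using this

/-- Under Assumptions 1–3, with `Λ₂ = (AAᵀ)⁻¹ A L₂ᵀL₂ Aᵀ` and
`M_{λ₂} = λ₂ Λ₂ (AAᵀ + λ₂Λ₂)⁻¹`, the minimum over `x₂` of
`½‖y − A(x₁ + x₂)‖₂² + (λ₂/2)‖L₂x₂‖₂²` equals `½ (y − Ax₁)ᵀ M_{λ₂} (y − Ax₁)`. -/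
theorem stmt7 {L N M₂ : ℕ} (A : Matrix (Fin L) (Fin N) ℝ) (L₂ : Matrix (Fin M₂) (Fin N) ℝ)
    (lam₂ : ℝ) (hlam₂ : 0 < lam₂)
    (hA : IsUnit (A * Aᵀ))
    (hker : ∀ x : Fin N → ℝ, A.mulVec x = 0 → L₂.mulVec x = 0 → x = 0)
    (hinv : ∀ x : Fin N → ℝ,
      (∀ z : Fin N → ℝ, A.mulVec z = 0 → x ⬝ᵥ z = 0) →
      (∀ z : Fin N → ℝ, A.mulVec z = 0 → ((L₂ᵀ * L₂).mulVec x) ⬝ᵥ z = 0))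
    (y : Fin L → ℝ) (x₁ : Fin N → ℝ)
    (Λ₂ : Matrix (Fin L) (Fin L) ℝ) (hΛ₂ : Λ₂ = (A * Aᵀ)⁻¹ * (A * L₂ᵀ * L₂ * Aᵀ))
    (M : Matrix (Fin L) (Fin L) ℝ) (hM : M = lam₂ • Λ₂ * (A * Aᵀ + lam₂ • Λ₂)⁻¹) :
    IsLeast
      (Set.range fun x₂ : Fin N → ℝ =>
        1 / 2 * ((y - A.mulVec (x₁ + x₂)) ⬝ᵥ (y - A.mulVec (x₁ + x₂))) +
        lam₂ / 2 * (L₂.mulVec x₂ ⬝ᵥ L₂.mulVec x₂))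
      (1 / 2 * ((y - A.mulVec x₁) ⬝ᵥ M.mulVec (y - A.mulVec x₁))) := by
  -- Notation
  set S : Matrix (Fin L) (Fin L) ℝ := A * Aᵀ with hSdef
  set Q : Matrix (Fin N) (Fin N) ℝ := Aᵀ * A + lam₂ • (L₂ᵀ * L₂) with hQdef
  have hSdet : IsUnit S.det := (isUnit_iff_isUnit_det S).mp hA
  have hSS' : S * S⁻¹ = 1 := mul_nonsing_inv S hSdet
  have hS'S : S⁻¹ * S = 1 := nonsing_inv_mul S hSdet
  -- bilinear form of Q
  have hQbil : ∀ u w : Fin N → ℝ, u ⬝ᵥ Q.mulVec w =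
      A.mulVec u ⬝ᵥ A.mulVec w + lam₂ * (L₂.mulVec u ⬝ᵥ L₂.mulVec w) := by
    intro u w
    rw [hQdef, add_mulVec, dotProduct_add, smul_mulVec, dotProduct_smul, smul_eq_mul,
      ← mulVec_mulVec, ← adjDot, ← mulVec_mulVec, ← adjDot]
  -- Q is invertible
  have hQzero : ∀ x : Fin N → ℝ, Q.mulVec x = 0 → x = 0 := by
    intro x hx
    have h0 : A.mulVec x ⬝ᵥ A.mulVec x + lam₂ * (L₂.mulVec x ⬝ᵥ L₂.mulVec x) = 0 := by
      rw [← hQbil, hx, dotProduct_zero]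
    have h1 : A.mulVec x ⬝ᵥ A.mulVec x = 0 := by
      nlinarith [dotSelfNonneg (A.mulVec x), dotSelfNonneg (L₂.mulVec x)]
    have h2 : L₂.mulVec x ⬝ᵥ L₂.mulVec x = 0 := by nlinarith [dotSelfNonneg (L₂.mulVec x)]
    exact hker x (dotProduct_self_eq_zero.mp h1) (dotProduct_self_eq_zero.mp h2)
  have hQ : IsUnit Q := by
    rw [← Matrix.mulVec_injective_iff_isUnit]
    intro a b hab
    have := hQzero (a - b) (by rw [mulVec_sub, hab, sub_self])
    exact sub_eq_zero.mp this
  have hQdet : IsUnit Q.det := (isUnit_iff_isUnit_det Q).mp hQ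
  have hQQ' : Q * Q⁻¹ = 1 := mul_nonsing_inv Q hQdet
  have hQ'Q : Q⁻¹ * Q = 1 := nonsing_inv_mul Q hQdet
  -- T := A Q Aᵀ is invertible
  set T : Matrix (Fin L) (Fin L) ℝ := A * Q * Aᵀ with hTdef
  have hT : IsUnit T := by
    rw [← Matrix.mulVec_injective_iff_isUnit]
    intro a b hab
    suffices hsuff : ∀ v : Fin L → ℝ, T.mulVec v = 0 → v = 0 by
      exact sub_eq_zero.mp (hsuff (a - b) (by rw [mulVec_sub, hab, sub_self]))
    intro v hv
    have hTv : T.mulVec v = A.mulVec (Q.mulVec (Aᵀ.mulVec v)) := by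
      rw [hTdef, ← mulVec_mulVec, ← mulVec_mulVec]
    have h0 : (Aᵀ.mulVec v) ⬝ᵥ Q.mulVec (Aᵀ.mulVec v) = 0 := by
      have := adjDot A (Q.mulVec (Aᵀ.mulVec v)) v
      rw [← hTv, hv, zero_dotProduct] at this
      rw [dotProduct_comm, ← this]
    rw [hQbil] at h0
    have h1 : A.mulVec (Aᵀ.mulVec v) ⬝ᵥ A.mulVec (Aᵀ.mulVec v) = 0 := by
      nlinarith [dotSelfNonneg (A.mulVec (Aᵀ.mulVec v)), dotSelfNonneg (L₂.mulVec (Aᵀ.mulVec v))]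
    have h2 : L₂.mulVec (Aᵀ.mulVec v) ⬝ᵥ L₂.mulVec (Aᵀ.mulVec v) = 0 := by
      nlinarith [dotSelfNonneg (L₂.mulVec (Aᵀ.mulVec v))]
    have hAv : Aᵀ.mulVec v = 0 :=
      hker _ (dotProduct_self_eq_zero.mp h1) (dotProduct_self_eq_zero.mp h2)
    have hSv : S.mulVec v = 0 := by rw [hSdef, ← mulVec_mulVec, hAv, mulVec_zero]
    have hSinj : Function.Injective S.mulVec := Matrix.mulVec_injective_iff_isUnit.mpr hA
    have : S.mulVec v = S.mulVec 0 := by rw [hSv, mulVec_zero]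
    exact hSinj this
  -- orthogonality to ker A of vectors in range Aᵀ
  have horth : ∀ (v : Fin L → ℝ) (z : Fin N → ℝ), A.mulVec z = 0 → (Aᵀ.mulVec v) ⬝ᵥ z = 0 := by
    intro v z hz
    rw [adjDot Aᵀ v z, transpose_transpose, hz, dotProduct_zero]
  -- P w = w for w orthogonal to ker A, where P = Aᵀ S⁻¹ A
  have hproj : ∀ w : Fin N → ℝ, (∀ z : Fin N → ℝ, A.mulVec z = 0 → w ⬝ᵥ z = 0) →
      Aᵀ.mulVec (S⁻¹.mulVec (A.mulVec w)) = w := by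
    intro w hw
    set Pw := Aᵀ.mulVec (S⁻¹.mulVec (A.mulVec w)) with hPw
    have hAPw : A.mulVec Pw = A.mulVec w := by
      rw [hPw, mulVec_mulVec, mulVec_mulVec, ← hSdef, hSS', one_mulVec]
    have hAd : A.mulVec (w - Pw) = 0 := by rw [mulVec_sub, hAPw, sub_self]
    have hd1 : w ⬝ᵥ (w - Pw) = 0 := hw _ hAd
    have hd2 : Pw ⬝ᵥ (w - Pw) = 0 := horth _ _ hAd
    have hdd : (w - Pw) ⬝ᵥ (w - Pw) = 0 := by
      rw [sub_dotProduct, hd1, hd2, sub_self]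
    exact (sub_eq_zero.mp (dotProduct_self_eq_zero.mp hdd)).symm
  -- key invariance fact, vector form
  have hkeyv : ∀ v : Fin L → ℝ,
      Aᵀ.mulVec (S⁻¹.mulVec (A.mulVec (Q.mulVec (Aᵀ.mulVec v)))) = Q.mulVec (Aᵀ.mulVec v) := by
    intro v
    set x := Aᵀ.mulVec v with hx
    have hxorth : ∀ z : Fin N → ℝ, A.mulVec z = 0 → x ⬝ᵥ z = 0 := horth v
    have hworth := hinv x hxorth
    have hQx : Q.mulVec x = Aᵀ.mulVec (A.mulVec x) + lam₂ • (L₂ᵀ * L₂).mulVec x := by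
      rw [hQdef, add_mulVec, smul_mulVec, ← mulVec_mulVec]
    rw [hQx, mulVec_add, mulVec_add, mulVec_add]
    congr 1
    · exact hproj _ (horth (A.mulVec x))
    · rw [mulVec_smul, mulVec_smul, mulVec_smul]
      exact congrArg _ (hproj _ hworth)
  -- matrix form of invariance
  have hkeym : Aᵀ * (S⁻¹ * (A * (Q * Aᵀ))) = Q * Aᵀ :=
    matExt _ _ fun v => by simpa only [mulVec_mulVec] using hkeyv v
  -- S + λΛ₂ = S⁻¹ T
  have hAQAT : A * Q * Aᵀ = S * S + lam₂ • (A * L₂ᵀ * L₂ * Aᵀ) := by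
    rw [hQdef, hSdef]
    simp only [Matrix.mul_add, Matrix.add_mul, Matrix.mul_smul, Matrix.smul_mul,
      Matrix.mul_assoc]
  have hlem2 : S + lam₂ • Λ₂ = S⁻¹ * T := by
    rw [hTdef, hAQAT, Matrix.mul_add, Matrix.mul_smul, hΛ₂]
    congr 1
    rw [← Matrix.mul_assoc, hS'S, Matrix.one_mul]
  have hGunit : IsUnit (S + lam₂ • Λ₂) := by
    rw [hlem2]
    exact (Matrix.isUnit_nonsing_inv_iff.mpr hA).mul hT
  have hGdet : IsUnit (S + lam₂ • Λ₂).det := (isUnit_iff_isUnit_det _).mp hGunit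
  -- M = 1 - A Q⁻¹ Aᵀ
  have hMkey : M = 1 - A * Q⁻¹ * Aᵀ := by
    have h1 : A * Q⁻¹ * Aᵀ * (S⁻¹ * T) = S := by
      rw [hTdef]
      calc A * Q⁻¹ * Aᵀ * (S⁻¹ * (A * Q * Aᵀ))
          = A * Q⁻¹ * (Aᵀ * (S⁻¹ * (A * (Q * Aᵀ)))) := by simp only [Matrix.mul_assoc]
        _ = A * Q⁻¹ * (Q * Aᵀ) := by rw [hkeym]
        _ = A * (Q⁻¹ * Q) * Aᵀ := by simp only [Matrix.mul_assoc]
        _ = A * Aᵀ := by rw [hQ'Q, Matrix.mul_one]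
        _ = S := hSdef.symm
    have key : (1 - A * Q⁻¹ * Aᵀ) * (S + lam₂ • Λ₂) = lam₂ • Λ₂ := by
      rw [Matrix.sub_mul, Matrix.one_mul]
      nth_rewrite 2 [hlem2]
      rw [h1, add_sub_cancel_left]
    rw [hM]
    nth_rewrite 1 [← key]
    rw [Matrix.mul_assoc, mul_nonsing_inv _ hGdet, Matrix.mul_one]
  -- the residual and the minimizer (made opaque to avoid accidental unfolding)
  obtain ⟨r, hr⟩ : ∃ r : Fin L → ℝ, r = y - A.mulVec x₁ := ⟨_, rfl⟩
  rw [← hr]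
  obtain ⟨xs, hxs⟩ : ∃ xs : Fin N → ℝ, xs = Q⁻¹.mulVec (Aᵀ.mulVec r) := ⟨_, rfl⟩
  have hQxs : Q.mulVec xs = Aᵀ.mulVec r := by
    rw [hxs, mulVec_mulVec, hQQ', one_mulVec]
  -- normal-equation facts
  have hfact : ∀ u : Fin N → ℝ,
      A.mulVec u ⬝ᵥ A.mulVec xs + lam₂ * (L₂.mulVec u ⬝ᵥ L₂.mulVec xs) = r ⬝ᵥ A.mulVec u := by
    intro u
    rw [← hQbil, hQxs, ← adjDot, dotProduct_comm]
  -- value of M-quadratic form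
  have hV : r ⬝ᵥ M.mulVec r = r ⬝ᵥ r - r ⬝ᵥ A.mulVec xs := by
    have hMr : M.mulVec r = r - A.mulVec xs := by
      rw [hMkey, sub_mulVec, one_mulVec, hxs, mulVec_mulVec, mulVec_mulVec]
    rw [hMr, dotProduct_sub]
  -- the master decomposition
  have hmaster : ∀ x₂ : Fin N → ℝ,
      1 / 2 * ((y - A.mulVec (x₁ + x₂)) ⬝ᵥ (y - A.mulVec (x₁ + x₂))) +
        lam₂ / 2 * (L₂.mulVec x₂ ⬝ᵥ L₂.mulVec x₂) =
      1 / 2 * (r ⬝ᵥ M.mulVec r) +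
        1 / 2 * (A.mulVec (x₂ - xs) ⬝ᵥ A.mulVec (x₂ - xs)) +
        lam₂ / 2 * (L₂.mulVec (x₂ - xs) ⬝ᵥ L₂.mulVec (x₂ - xs)) := by
    intro x₂
    have hy : y - A.mulVec (x₁ + x₂) = r - A.mulVec x₂ := by
      rw [hr, mulVec_add]; abel
    have f1 := hfact xs
    have f2 := hfact x₂
    rw [hy, hV, mulVec_sub, mulVec_sub, subDot, subDot, subDot]
    linear_combination f2 - (1 / 2 : ℝ) * f1
  constructor
  · exact ⟨xs, by
      simp only [hmaster, sub_self, mulVec_zero, dotProduct_zero, mul_zero, add_zero]⟩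
  · rintro v ⟨x₂, rfl⟩
    simp only [hmaster]
    nlinarith [dotSelfNonneg (A.mulVec (x₂ - xs)), dotSelfNonneg (L₂.mulVec (x₂ - xs)), hlam₂]
end

section
/- Let A be a real L×N matrix with full row rank, L₁ ∈ ℝ^{M₁×N}, L₂ ∈ ℝ^{M₂×N} such that ker A ∩ ker L₂ = {0} and the orthogonal complement of ker A is invariant under L₂ᵀL₂, y ∈ ℝ^L, and λ₁, λ₂ > 0. Define Λ₂ = (AAᵀ)⁻¹ A L₂ᵀL₂ Aᵀ and M_{λ₂} = λ₂ Λ₂ (AAᵀ + λ₂Λ₂)⁻¹. Then a pair (x₁, x₂) ∈ ℝ^N × ℝ^N minimizes J(x₁, x₂) = ½‖y − A(x₁ + x₂)‖₂² + λ₁‖L₁x₁‖₁ + (λ₂/2)‖L₂x₂‖₂² if and only if x₁ minimizes J₁(x₁) = ½(y − Ax₁)ᵀ M_{λ₂} (y − Ax₁) + λ₁‖L₁x₁‖₁ and x₂ = −(AᵀA + λ₂L₂ᵀL₂)⁻¹ Aᵀ(Ax₁ − y). -/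
open Matrix

/-- Two real matrices acting identically on all vectors are equal. -/
lemma stmt8_matrix_ext {m n : ℕ} {P Q : Matrix (Fin m) (Fin n) ℝ}
    (h : ∀ u : Fin n → ℝ, P *ᵥ u = Q *ᵥ u) : P = Q := by
  ext i j
  have := congrFun (h (Pi.single j 1)) i
  simpa using this

/-- A square real matrix with trivial mulVec kernel is a unit. -/
lemma stmt8_isUnit_of_ker {n : ℕ} {P : Matrix (Fin n) (Fin n) ℝ}
    (h : ∀ u : Fin n → ℝ, P *ᵥ u = 0 → u = 0) : IsUnit P := by
  rw [← Matrix.mulVec_injective_iff_isUnit]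
  intro a b hab
  have h0 : P *ᵥ (a - b) = 0 := by rw [Matrix.mulVec_sub, hab, sub_self]
  exact sub_eq_zero.mp (h _ h0)

/-- Transpose-dot identity, transpose on the right. -/
lemma stmt8_dot_transpose {a b : ℕ} (P : Matrix (Fin a) (Fin b) ℝ) (u : Fin b → ℝ)
    (v : Fin a → ℝ) : u ⬝ᵥ (Pᵀ *ᵥ v) = (P *ᵥ u) ⬝ᵥ v := by
  rw [Matrix.dotProduct_mulVec, Matrix.vecMul_transpose]

/-- Transpose-dot identity, moving the matrix to the left. -/
lemma stmt8_dot_mul {a b : ℕ} (P : Matrix (Fin a) (Fin b) ℝ) (u : Fin a → ℝ)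
    (v : Fin b → ℝ) : u ⬝ᵥ (P *ᵥ v) = (Pᵀ *ᵥ u) ⬝ᵥ v := by
  rw [Matrix.dotProduct_mulVec, ← Matrix.mulVec_transpose]

lemma stmt8_dot_self_nonneg {k : ℕ} (v : Fin k → ℝ) : 0 ≤ v ⬝ᵥ v :=
  Finset.sum_nonneg fun i _ => mul_self_nonneg (v i)

/-- decoupling in Theorem 1 of the paper. Under Assumptions 1–3, a pair
`(x₁, x₂)` minimizes the composite objective
`J(x₁, x₂) = ½‖y − A(x₁ + x₂)‖₂² + λ₁‖L₁x₁‖₁ + (λ₂/2)‖L₂x₂‖₂²`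
iff `x₁` minimizes `J₁(x₁) = ½(y − Ax₁)ᵀ M_{λ₂} (y − Ax₁) + λ₁‖L₁x₁‖₁` and
`x₂ = −(AᵀA + λ₂L₂ᵀL₂)⁻¹ Aᵀ(Ax₁ − y)`. -/
theorem stmt8 {L N M₁ M₂ : ℕ} (A : Matrix (Fin L) (Fin N) ℝ)
    (L₁ : Matrix (Fin M₁) (Fin N) ℝ) (L₂ : Matrix (Fin M₂) (Fin N) ℝ)
    (y : Fin L → ℝ) (lam₁ lam₂ : ℝ) (hlam₁ : 0 < lam₁) (hlam₂ : 0 < lam₂)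
    (hA : IsUnit (A * Aᵀ))
    (hker : ∀ x : Fin N → ℝ, A.mulVec x = 0 → L₂.mulVec x = 0 → x = 0)
    (hinv : ∀ x : Fin N → ℝ,
      (∀ z : Fin N → ℝ, A.mulVec z = 0 → x ⬝ᵥ z = 0) →
      (∀ z : Fin N → ℝ, A.mulVec z = 0 → ((L₂ᵀ * L₂).mulVec x) ⬝ᵥ z = 0))
    (Λ₂ : Matrix (Fin L) (Fin L) ℝ) (hΛ₂ : Λ₂ = (A * Aᵀ)⁻¹ * (A * L₂ᵀ * L₂ * Aᵀ))
    (M : Matrix (Fin L) (Fin L) ℝ) (hM : M = lam₂ • Λ₂ * (A * Aᵀ + lam₂ • Λ₂)⁻¹)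
    (J : (Fin N → ℝ) → (Fin N → ℝ) → ℝ)
    (hJ : ∀ x₁ x₂ : Fin N → ℝ, J x₁ x₂ =
      1 / 2 * ((y - A.mulVec (x₁ + x₂)) ⬝ᵥ (y - A.mulVec (x₁ + x₂))) +
      lam₁ * (∑ i, |L₁.mulVec x₁ i|) +
      lam₂ / 2 * (L₂.mulVec x₂ ⬝ᵥ L₂.mulVec x₂))
    (J₁ : (Fin N → ℝ) → ℝ)
    (hJ₁ : ∀ x₁ : Fin N → ℝ, J₁ x₁ =
      1 / 2 * ((y - A.mulVec x₁) ⬝ᵥ M.mulVec (y - A.mulVec x₁)) +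
      lam₁ * (∑ i, |L₁.mulVec x₁ i|))
    (x₁ x₂ : Fin N → ℝ) :
    (∀ z₁ z₂ : Fin N → ℝ, J x₁ x₂ ≤ J z₁ z₂) ↔
      ((∀ z₁ : Fin N → ℝ, J₁ x₁ ≤ J₁ z₁) ∧
        x₂ = -((Aᵀ * A + lam₂ • (L₂ᵀ * L₂))⁻¹.mulVec (Aᵀ.mulVec (A.mulVec x₁ - y)))) := by
  obtain ⟨C, hCdef⟩ : ∃ X, X = L₂ᵀ * L₂ := ⟨_, rfl⟩
  obtain ⟨G, hGdef⟩ : ∃ X, X = A * Aᵀ := ⟨_, rfl⟩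
  obtain ⟨B, hBdef⟩ : ∃ X, X = Aᵀ * A + lam₂ • C := ⟨_, rfl⟩
  obtain ⟨W, hWdef⟩ : ∃ X, X = A * C * Aᵀ := ⟨_, rfl⟩
  rw [← hCdef] at hinv
  rw [← hCdef, ← hBdef]
  have hAG : IsUnit G := hGdef ▸ hA
  -- basic facts about G
  have hGdet : IsUnit G.det := (Matrix.isUnit_iff_isUnit_det G).mp hAG
  have hGl : G⁻¹ * G = 1 := Matrix.nonsing_inv_mul G hGdet
  have hGr : G * G⁻¹ = 1 := Matrix.mul_nonsing_inv G hGdet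
  have hGsym : Gᵀ = G := by rw [hGdef, Matrix.transpose_mul, Matrix.transpose_transpose]
  have hBsym : Bᵀ = B := by
    rw [hBdef, Matrix.transpose_add, Matrix.transpose_smul, hCdef, Matrix.transpose_mul,
      Matrix.transpose_mul, Matrix.transpose_transpose, Matrix.transpose_transpose]
  -- quadratic form of B
  have hBquad : ∀ u : Fin N → ℝ, u ⬝ᵥ (B *ᵥ u)
      = (A *ᵥ u) ⬝ᵥ (A *ᵥ u) + lam₂ * ((L₂ *ᵥ u) ⬝ᵥ (L₂ *ᵥ u)) := by
    intro u
    rw [hBdef, Matrix.add_mulVec, Matrix.smul_mulVec, dotProduct_add, dotProduct_smul,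
      smul_eq_mul, hCdef, ← Matrix.mulVec_mulVec, ← Matrix.mulVec_mulVec,
      stmt8_dot_transpose, stmt8_dot_transpose]
  have hBzero : ∀ u : Fin N → ℝ, u ⬝ᵥ (B *ᵥ u) = 0 → u = 0 := by
    intro u hu
    rw [hBquad] at hu
    have h1 := stmt8_dot_self_nonneg (A *ᵥ u)
    have h2 := stmt8_dot_self_nonneg (L₂ *ᵥ u)
    have h2' : 0 ≤ lam₂ * ((L₂ *ᵥ u) ⬝ᵥ (L₂ *ᵥ u)) := mul_nonneg hlam₂.le h2
    have hA0 : (A *ᵥ u) ⬝ᵥ (A *ᵥ u) = 0 := by linarith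
    have hL0 : (L₂ *ᵥ u) ⬝ᵥ (L₂ *ᵥ u) = 0 := by nlinarith
    exact hker u (dotProduct_self_eq_zero.mp hA0) (dotProduct_self_eq_zero.mp hL0)
  have hBunit : IsUnit B := stmt8_isUnit_of_ker fun u hu =>
    hBzero u (by rw [hu, dotProduct_zero])
  have hBdet : IsUnit B.det := (Matrix.isUnit_iff_isUnit_det B).mp hBunit
  have hBl : B⁻¹ * B = 1 := Matrix.nonsing_inv_mul B hBdet
  have hBr : B * B⁻¹ = 1 := Matrix.mul_nonsing_inv B hBdet
  -- invariance identity (★): C Aᵀ = Aᵀ (G⁻¹ W)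
  have hstar : C * Aᵀ = Aᵀ * (G⁻¹ * W) := by
    apply stmt8_matrix_ext
    intro u
    obtain ⟨v, hv⟩ : ∃ v, v = C *ᵥ (Aᵀ *ᵥ u) := ⟨_, rfl⟩
    have hperp : ∀ z : Fin N → ℝ, A *ᵥ z = 0 → v ⬝ᵥ z = 0 := by
      intro z hz
      rw [hv]
      refine hinv (Aᵀ *ᵥ u) ?_ z hz
      intro z' hz'
      rw [Matrix.mulVec_transpose, ← Matrix.dotProduct_mulVec, hz', dotProduct_zero]
    obtain ⟨w, hw⟩ : ∃ w, w = v - Aᵀ *ᵥ (G⁻¹ *ᵥ (A *ᵥ v)) := ⟨_, rfl⟩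
    have hchain : A *ᵥ (Aᵀ *ᵥ (G⁻¹ *ᵥ (A *ᵥ v))) = A *ᵥ v := by
      rw [Matrix.mulVec_mulVec, Matrix.mulVec_mulVec, ← hGdef, hGr, Matrix.one_mulVec]
    have hAw : A *ᵥ w = 0 := by
      rw [hw, Matrix.mulVec_sub, hchain, sub_self]
    have hvw : v ⬝ᵥ w = 0 := hperp w hAw
    have hxw : (Aᵀ *ᵥ (G⁻¹ *ᵥ (A *ᵥ v))) ⬝ᵥ w = 0 := by
      rw [Matrix.mulVec_transpose, ← Matrix.dotProduct_mulVec, hAw, dotProduct_zero]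
    have hww : w ⬝ᵥ w = 0 := by
      calc w ⬝ᵥ w = v ⬝ᵥ w - (Aᵀ *ᵥ (G⁻¹ *ᵥ (A *ᵥ v))) ⬝ᵥ w := by
            rw [hw, sub_dotProduct]
        _ = 0 := by rw [hvw, hxw, sub_zero]
    have hveq : v = Aᵀ *ᵥ (G⁻¹ *ᵥ (A *ᵥ v)) := by
      have h0 := dotProduct_self_eq_zero.mp hww
      rw [hw, sub_eq_zero] at h0
      exact h0
    calc (C * Aᵀ) *ᵥ u = v := by rw [hv, Matrix.mulVec_mulVec]
      _ = Aᵀ *ᵥ (G⁻¹ *ᵥ (A *ᵥ v)) := hveq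
      _ = (Aᵀ * (G⁻¹ * W)) *ᵥ u := by
          rw [hv, hWdef]
          simp only [Matrix.mulVec_mulVec, Matrix.mul_assoc]
  -- Λ₂ in terms of W, and K
  have hΛ : Λ₂ = G⁻¹ * W := by
    rw [hΛ₂, ← hGdef, hWdef, hCdef]
    simp only [Matrix.mul_assoc]
  obtain ⟨K, hKdef⟩ : ∃ X, X = G + lam₂ • Λ₂ := ⟨_, rfl⟩
  have hBA : B * Aᵀ = Aᵀ * K := by
    rw [hBdef, hKdef, hΛ, Matrix.add_mul, Matrix.smul_mul, hstar, Matrix.mul_add,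
      Matrix.mul_smul, Matrix.mul_assoc, ← hGdef]
  -- K is invertible
  have hPz : ∀ u : Fin L → ℝ, (G * G + lam₂ • W) *ᵥ u = 0 → u = 0 := by
    intro u hu
    have hq : u ⬝ᵥ ((G * G + lam₂ • W) *ᵥ u) = 0 := by rw [hu, dotProduct_zero]
    have hGG : u ⬝ᵥ ((G * G) *ᵥ u) = (G *ᵥ u) ⬝ᵥ (G *ᵥ u) := by
      rw [← Matrix.mulVec_mulVec, stmt8_dot_mul, hGsym]
    have hWq : u ⬝ᵥ (W *ᵥ u) = (L₂ *ᵥ (Aᵀ *ᵥ u)) ⬝ᵥ (L₂ *ᵥ (Aᵀ *ᵥ u)) := by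
      rw [hWdef, hCdef, ← Matrix.mulVec_mulVec, ← Matrix.mulVec_mulVec,
        ← Matrix.mulVec_mulVec, stmt8_dot_mul, stmt8_dot_transpose]
    rw [Matrix.add_mulVec, Matrix.smul_mulVec, dotProduct_add, dotProduct_smul,
      smul_eq_mul, hGG, hWq] at hq
    have h1 := stmt8_dot_self_nonneg (G *ᵥ u)
    have h2 := stmt8_dot_self_nonneg (L₂ *ᵥ (Aᵀ *ᵥ u))
    have h2' : 0 ≤ lam₂ * ((L₂ *ᵥ (Aᵀ *ᵥ u)) ⬝ᵥ (L₂ *ᵥ (Aᵀ *ᵥ u))) := mul_nonneg hlam₂.le h2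
    have hG0 : (G *ᵥ u) ⬝ᵥ (G *ᵥ u) = 0 := by linarith
    have hGu : G *ᵥ u = 0 := dotProduct_self_eq_zero.mp hG0
    have hu0 : u = G⁻¹ *ᵥ (G *ᵥ u) := by
      rw [Matrix.mulVec_mulVec, hGl, Matrix.one_mulVec]
    rw [hu0, hGu, Matrix.mulVec_zero]
  have hPunit : IsUnit (G * G + lam₂ • W) := stmt8_isUnit_of_ker hPz
  have hKeq : K = G⁻¹ * (G * G + lam₂ • W) := by
    rw [hKdef, hΛ, Matrix.mul_add, Matrix.mul_smul, ← Matrix.mul_assoc G⁻¹ G G, hGl, one_mul]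
  have hGinvUnit : IsUnit G⁻¹ := ⟨⟨G⁻¹, G, hGl, hGr⟩, rfl⟩
  have hKunit : IsUnit K := by rw [hKeq]; exact hGinvUnit.mul hPunit
  have hKdet : IsUnit K.det := (Matrix.isUnit_iff_isUnit_det K).mp hKunit
  have hKr : K * K⁻¹ = 1 := Matrix.mul_nonsing_inv K hKdet
  -- A B⁻¹ Aᵀ = G K⁻¹ and the key matrix identity M + A B⁻¹ Aᵀ = 1
  have h1 : Aᵀ * K⁻¹ = B⁻¹ * Aᵀ := by
    calc Aᵀ * K⁻¹ = (B⁻¹ * B) * Aᵀ * K⁻¹ := by rw [hBl, Matrix.one_mul]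
      _ = B⁻¹ * (B * Aᵀ) * K⁻¹ := by rw [Matrix.mul_assoc B⁻¹ B Aᵀ]
      _ = B⁻¹ * (Aᵀ * K) * K⁻¹ := by rw [hBA]
      _ = B⁻¹ * (Aᵀ * (K * K⁻¹)) := by simp only [Matrix.mul_assoc]
      _ = B⁻¹ * Aᵀ := by rw [hKr, Matrix.mul_one]
  have hAB : A * B⁻¹ * Aᵀ = G * K⁻¹ := by
    calc A * B⁻¹ * Aᵀ = A * (B⁻¹ * Aᵀ) := by rw [Matrix.mul_assoc]
      _ = A * (Aᵀ * K⁻¹) := by rw [← h1]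
      _ = G * K⁻¹ := by rw [← Matrix.mul_assoc, ← hGdef]
  have hMsum : M + A * B⁻¹ * Aᵀ = 1 := by
    rw [hM, ← hGdef, ← hKdef, hAB, ← Matrix.add_mul, add_comm (lam₂ • Λ₂) G, ← hKdef, hKr]
  -- decoupling decomposition of the objective
  obtain ⟨s, hs⟩ : ∃ s : (Fin N → ℝ) → (Fin N → ℝ),
      s = fun z => B⁻¹ *ᵥ (Aᵀ *ᵥ (y - A *ᵥ z)) := ⟨_, rfl⟩
  have hsz : ∀ z : Fin N → ℝ, s z = B⁻¹ *ᵥ (Aᵀ *ᵥ (y - A *ᵥ z)) := fun z => by rw [hs]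
  have key : ∀ z₁ z₂ : Fin N → ℝ,
      J z₁ z₂ = J₁ z₁ + 1 / 2 * ((z₂ - s z₁) ⬝ᵥ (B *ᵥ (z₂ - s z₁))) := by
    intro z₁ z₂
    rw [hJ, hJ₁]
    obtain ⟨r, hr⟩ : ∃ r, r = y - A *ᵥ z₁ := ⟨_, rfl⟩
    rw [← hr]
    have hBs : B *ᵥ s z₁ = Aᵀ *ᵥ r := by
      rw [hsz z₁, ← hr, Matrix.mulVec_mulVec, hBr, Matrix.one_mulVec]
    have hAs : (A *ᵥ s z₁) ⬝ᵥ r = r ⬝ᵥ r - r ⬝ᵥ (M *ᵥ r) := by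
      have hh1 : A *ᵥ s z₁ = (A * B⁻¹ * Aᵀ) *ᵥ r := by
        rw [hsz z₁, ← hr, Matrix.mulVec_mulVec, Matrix.mulVec_mulVec]
      have hh2 : (A * B⁻¹ * Aᵀ) *ᵥ r = r - M *ᵥ r := by
        have h := congrArg (fun X => X *ᵥ r) hMsum
        simp only [Matrix.add_mulVec, Matrix.one_mulVec] at h
        exact eq_sub_of_add_eq' h
      rw [hh1, hh2, sub_dotProduct, dotProduct_comm (M *ᵥ r) r]
    have e1 : y - A *ᵥ (z₁ + z₂) = r - A *ᵥ z₂ := by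
      rw [Matrix.mulVec_add, hr, sub_add_eq_sub_sub]
    have t1 : z₂ ⬝ᵥ (Aᵀ *ᵥ r) = r ⬝ᵥ (A *ᵥ z₂) := by
      rw [stmt8_dot_transpose, dotProduct_comm]
    have t2 : s z₁ ⬝ᵥ (B *ᵥ z₂) = r ⬝ᵥ (A *ᵥ z₂) := by
      rw [stmt8_dot_mul, hBsym, hBs, dotProduct_comm, t1]
    have t3 : s z₁ ⬝ᵥ (Aᵀ *ᵥ r) = r ⬝ᵥ r - r ⬝ᵥ (M *ᵥ r) := by
      rw [stmt8_dot_transpose, hAs]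
    have hdBd : (z₂ - s z₁) ⬝ᵥ (B *ᵥ (z₂ - s z₁))
        = z₂ ⬝ᵥ (B *ᵥ z₂) - 2 * (r ⬝ᵥ (A *ᵥ z₂)) + (r ⬝ᵥ r - r ⬝ᵥ (M *ᵥ r)) := by
      rw [Matrix.mulVec_sub, hBs, sub_dotProduct, dotProduct_sub,
        dotProduct_sub, t1, t2, t3]
      ring
    have hLexp : (r - A *ᵥ z₂) ⬝ᵥ (r - A *ᵥ z₂)
        = r ⬝ᵥ r - 2 * (r ⬝ᵥ (A *ᵥ z₂)) + (A *ᵥ z₂) ⬝ᵥ (A *ᵥ z₂) := by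
      rw [sub_dotProduct, dotProduct_sub, dotProduct_sub,
        dotProduct_comm (A *ᵥ z₂) r]
      ring
    rw [e1, hLexp, hdBd, hBquad z₂]
    ring
  -- nonnegativity of the quadratic remainder
  have hqnn : ∀ u : Fin N → ℝ, 0 ≤ u ⬝ᵥ (B *ᵥ u) := by
    intro u
    rw [hBquad]
    exact add_nonneg (stmt8_dot_self_nonneg _)
      (mul_nonneg hlam₂.le (stmt8_dot_self_nonneg _))
  have hsopt : ∀ z₁ : Fin N → ℝ, J z₁ (s z₁) = J₁ z₁ := by
    intro z₁
    rw [key z₁ (s z₁), sub_self, zero_dotProduct]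
    ring
  have hx2eq : -(B⁻¹.mulVec (Aᵀ.mulVec (A.mulVec x₁ - y))) = s x₁ := by
    rw [hsz x₁, ← neg_sub (A *ᵥ x₁) y, Matrix.mulVec_neg, Matrix.mulVec_neg]
  constructor
  · intro h
    constructor
    · intro z₁
      have ha : J₁ x₁ ≤ J x₁ x₂ := by
        rw [key x₁ x₂]
        have := hqnn (x₂ - s x₁)
        linarith
      have hb : J x₁ x₂ ≤ J z₁ (s z₁) := h z₁ (s z₁)
      rw [hsopt z₁] at hb
      linarith
    · have hb : J x₁ x₂ ≤ J₁ x₁ := by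
        have := h x₁ (s x₁)
        rwa [hsopt x₁] at this
      rw [key x₁ x₂] at hb
      have h3 : (x₂ - s x₁) ⬝ᵥ (B *ᵥ (x₂ - s x₁)) = 0 :=
        le_antisymm (by linarith) (hqnn _)
      have h4 : x₂ - s x₁ = 0 := hBzero _ h3
      rw [hx2eq]
      exact sub_eq_zero.mp h4
  · rintro ⟨hmin, h2⟩ z₁ z₂
    have hx : x₂ = s x₁ := h2.trans hx2eq
    calc J x₁ x₂ = J₁ x₁ := by rw [hx, hsopt]
      _ ≤ J₁ z₁ := hmin z₁
      _ ≤ J z₁ z₂ := by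
          rw [key z₁ z₂]
          have := hqnn (z₂ - s z₁)
          linarith
end

section
/- Let N ≥ 3, let F be the N×N DFT matrix with entries exp(−2πi·jk/N), let I ⊆ ℤ/Nℤ be a set of sampled frequencies with 0 ∈ I, and let A be the matrix formed by the rows of F indexed by I. Let d ∈ ℂ^{ℤ/Nℤ} be the vector with d(0) = −2, d(1) = 1, d(−1) = 1 and d(k) = 0 otherwise, and let Δ be the circulant matrix with first column d. Then ker A ∩ ker Δ = {0}: any x ∈ ℂ^{ℤ/Nℤ} with Ax = 0 and Δx = 0 is zero. -/
/-!
The mean of `x` is the `0`-th Fourier coefficient, so `Ax = 0` says that `x` sums to zero.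
If `Δx = 0`, the successive differences `x (j + 1) - x j` are all equal; they telescope to
zero around the cycle `ZMod N`, so the common difference vanishes and `x` is constant.
A constant vector with zero sum is zero.
-/

open Matrix

namespace ZMod

variable {N : ℕ} [NeZero N]

theorem forall_of_forall_add_one {P : ZMod N → Prop} (h0 : P 0) (hs : ∀ j, P j → P (j + 1))
    (j : ZMod N) : P j := by
  rw [← natCast_zmod_val j]
  induction j.val with
  | zero => simpa using h0
  | succ n ih => simpa using hs _ ih

theorem apply_eq_apply_zero_of_apply_add_one_eq {α : Type*} {x : ZMod N → α}
    (h : ∀ j, x (j + 1) = x j) (j : ZMod N) : x j = x 0 :=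
  forall_of_forall_add_one (P := fun j => x j = x 0) rfl (fun j hj => (h j).trans hj) j

theorem sum_apply_add_one_sub {G : Type*} [AddCommGroup G] (x : ZMod N → G) :
    ∑ j, (x (j + 1) - x j) = 0 := by
  rw [Finset.sum_sub_distrib, sub_eq_zero]
  exact Equiv.sum_comp (Equiv.addRight 1) x

theorem apply_eq_apply_zero_of_apply_sub_one_add_apply_add_one_eq {G : Type*} [AddCommGroup G]
    [IsAddTorsionFree G] {x : ZMod N → G} (h : ∀ j, x (j - 1) + x (j + 1) = 2 • x j)
    (j : ZMod N) : x j = x 0 := by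
  set δ : ZMod N → G := fun j => x (j + 1) - x j
  have hδ : ∀ j, δ j = δ 0 := apply_eq_apply_zero_of_apply_add_one_eq fun j => by
    have := h (j + 1)
    simp only [δ, add_sub_cancel_right, two_nsmul] at this ⊢
    rw [sub_eq_sub_iff_add_eq_add, ← this, add_comm]
  have hδ0 : δ 0 = 0 := by
    have hsum : N • δ 0 = 0 := by
      rw [← sum_apply_add_one_sub x, Finset.sum_congr rfl fun j _ => hδ j, Finset.sum_const,
        Finset.card_univ, ZMod.card]
    exact (nsmul_eq_zero_iff_right (NeZero.ne N)).mp hsum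
  exact apply_eq_apply_zero_of_apply_add_one_eq (fun j => sub_eq_zero.mp ((hδ j).trans hδ0)) j

end ZMod

theorem Matrix.circulant_mulVec_apply {n R : Type*} [AddCommGroup n] [Fintype n]
    [NonUnitalNonAssocSemiring R] (d x : n → R) (j : n) :
    (circulant d *ᵥ x) j = ∑ m, d m * x (j - m) :=
  Fintype.sum_equiv (Equiv.subLeft j) _ _ fun m => by simp

theorem Matrix.circulant_laplacian_mulVec_apply {N : ℕ} [NeZero N] (hN : 2 < N) {R : Type*}
    [Ring R] {d : ZMod N → R} (hd0 : d 0 = -2) (hd1 : d 1 = 1) (hdm1 : d (-1) = 1)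
    (hd : ∀ k : ZMod N, k ≠ 0 → k ≠ 1 → k ≠ -1 → d k = 0) (x : ZMod N → R) (j : ZMod N) :
    (circulant d *ᵥ x) j = x (j - 1) + x (j + 1) - 2 * x j := by
  have : Fact (1 < N) := ⟨by omega⟩
  have : Fact (2 < N) := ⟨hN⟩
  have h01 : (0 : ZMod N) ≠ 1 := zero_ne_one
  have h0m1 : (0 : ZMod N) ≠ -1 := by simp
  have h1m1 : (1 : ZMod N) ≠ -1 := ZMod.neg_one_ne_one.symm
  rw [circulant_mulVec_apply, ← Finset.sum_subset (Finset.subset_univ {0, 1, -1})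
    fun m _ hm => by
      simp only [Finset.mem_insert, Finset.mem_singleton, not_or] at hm
      rw [hd m hm.1 hm.2.1 hm.2.2, zero_mul],
    Finset.sum_insert (by simp [h01, h0m1]), Finset.sum_insert (by simp [h1m1]),
    Finset.sum_singleton, hd0, hd1, hdm1, sub_zero, sub_neg_eq_add]
  noncomm_ring

/-- For `N ≥ 3`, a set `I` of sampled frequencies with `0 ∈ I`, the partial
Fourier matrix `A` formed by the rows of the DFT matrix `F` indexed by `I`, and the circular
Laplacian `Δ` (circulant matrix with first column `d`, `d 0 = −2`, `d 1 = d (−1) = 1`,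
`d k = 0` otherwise), one has `ker A ∩ ker Δ = {0}`: any `x` with `Ax = 0` and `Δx = 0`
is zero. -/
theorem stmt15 {N : ℕ} [NeZero N] (hN : 3 ≤ N)
    (F : Matrix (ZMod N) (ZMod N) ℂ)
    (hF : ∀ j k : ZMod N,
      F j k = Complex.exp (-2 * Real.pi * Complex.I * (j.val * k.val) / N))
    (I : Finset (ZMod N)) (hI : (0 : ZMod N) ∈ I)
    (A : Matrix {k : ZMod N // k ∈ I} (ZMod N) ℂ)
    (hA : ∀ (i : {k : ZMod N // k ∈ I}) (k : ZMod N), A i k = F i.val k)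
    (d : ZMod N → ℂ)
    (hd0 : d 0 = -2) (hd1 : d 1 = 1) (hdm1 : d (-1) = 1)
    (hd : ∀ k : ZMod N, k ≠ 0 → k ≠ 1 → k ≠ -1 → d k = 0)
    (Δ : Matrix (ZMod N) (ZMod N) ℂ) (hΔ : Δ = Matrix.circulant d) :
    ∀ x : ZMod N → ℂ, A.mulVec x = 0 → Δ.mulVec x = 0 → x = 0 := by
  intro x hAx hΔx
  have hconst : ∀ j, x j = x 0 :=
    ZMod.apply_eq_apply_zero_of_apply_sub_one_add_apply_add_one_eq fun j => by
      have hj := congrFun hΔx j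
      rw [hΔ, circulant_laplacian_mulVec_apply hN hd0 hd1 hdm1 hd] at hj
      rw [two_nsmul, ← two_mul]
      exact sub_eq_zero.mp hj
  have hrow0 : ∀ k, A ⟨0, hI⟩ k = 1 := fun k => by simp [hA, hF]
  have hsum : ∑ k, x k = 0 := by
    simpa [mulVec, dotProduct, hrow0] using congrFun hAx ⟨0, hI⟩
  have hx0 : x 0 = 0 := by
    simpa [hconst, ZMod.card, NeZero.ne] using hsum
  exact funext fun j => (hconst j).trans hx0
end

section
/- Let N ≥ 3, let S : {1,…,L} → ℤ/Nℤ be injective with 0 in its image, let F be the N×N DFT matrix with entries exp(−2πi·jk/N), and let A be the L×N matrix whose j-th row is the S(j)-th row of F. Let d ∈ ℂ^{ℤ/Nℤ} be the vector with d(0) = −2, d(1) = 1, d(−1) = 1 and d(k) = 0 otherwise, Δ the circulant matrix with first column d, and d̂ = Fd (with real entries d̂(k) = 2cos(2πk/N) − 2). Let λ₂ > 0. Then Λ₂ := (AAᴴ)⁻¹ A ΔᴴΔ Aᴴ = diag(d̂(S(j))²), the matrix AAᴴ + λ₂Λ₂ is invertible, and M_{λ₂} := λ₂ Λ₂ (AAᴴ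 + λ₂Λ₂)⁻¹ is the diagonal matrix with j-th diagonal entry λ₂ d̂(S(j))² / (N + λ₂ d̂(S(j))²). -/
open Matrix

open Finset
noncomputable def zet (N : ℕ) : ℂ := Complex.exp (-(2 * Real.pi * Complex.I) / N)

lemma zet_prim {N : ℕ} (hN : N ≠ 0) : IsPrimitiveRoot (zet N) N := by
  have h := Complex.isPrimitiveRoot_exp N hN
  have hz : zet N = (Complex.exp (2 * Real.pi * Complex.I / N))⁻¹ := by
    rw [← Complex.exp_neg]; unfold zet; ring_nf
  rw [hz]; exact h.inv

lemma zet_pow_N {N : ℕ} (hN : N ≠ 0) : zet N ^ N = 1 := (zet_prim hN).pow_eq_one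

lemma zet_pow_mod {N : ℕ} (hN : N ≠ 0) (m : ℕ) : zet N ^ (m % N) = zet N ^ m := by
  conv_rhs => rw [← Nat.mod_add_div m N]
  rw [pow_add, pow_mul, zet_pow_N hN, one_pow, mul_one]

noncomputable def eZ (N : ℕ) [NeZero N] (t : ZMod N) : ℂ := zet N ^ t.val

lemma eZ_exp {N : ℕ} [NeZero N] (m : ℕ) :
    zet N ^ m = Complex.exp (-2 * Real.pi * Complex.I * m / N) := by
  rw [show (-2 * Real.pi * Complex.I * m / N : ℂ)
      = m * (-(2 * Real.pi * Complex.I) / N) by ring, Complex.exp_nat_mul]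
  rfl

lemma eZ_add {N : ℕ} [NeZero N] (a b : ZMod N) : eZ N (a + b) = eZ N a * eZ N b := by
  unfold eZ
  rw [ZMod.val_add, zet_pow_mod (NeZero.ne N), pow_add]

lemma eZ_zero {N : ℕ} [NeZero N] : eZ N 0 = 1 := by
  unfold eZ; rw [ZMod.val_zero, pow_zero]

lemma eZ_mul {N : ℕ} [NeZero N] (a b : ZMod N) : eZ N (a * b) = zet N ^ (a.val * b.val) := by
  unfold eZ
  rw [ZMod.val_mul, zet_pow_mod (NeZero.ne N)]

lemma eZ_mul_neg {N : ℕ} [NeZero N] (a : ZMod N) : eZ N a * eZ N (-a) = 1 := by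
  rw [← eZ_add, add_neg_cancel, eZ_zero]

lemma zet_conj {N : ℕ} : (starRingEnd ℂ) (zet N) = (zet N)⁻¹ := by
  unfold zet
  rw [← Complex.exp_conj, ← Complex.exp_neg]
  congr 1
  simp [map_div₀, Complex.conj_I]
  rw [show (starRingEnd ℂ) 2 = (2 : ℂ) from map_ofNat _ 2]
  ring

lemma eZ_conj {N : ℕ} [NeZero N] (a : ZMod N) :
    (starRingEnd ℂ) (eZ N a) = eZ N (-a) := by
  have h : eZ N (-a) = (eZ N a)⁻¹ := eq_inv_of_mul_eq_one_right (eZ_mul_neg a)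
  rw [h, show eZ N a = zet N ^ a.val from rfl, map_pow, zet_conj, inv_pow]

lemma eZ_sum {N : ℕ} [NeZero N] (s : ZMod N) :
    ∑ m : ZMod N, eZ N (s * m) = if s = 0 then (N : ℂ) else 0 := by
  by_cases hs : s = 0
  · simp [hs, eZ_zero, ZMod.card]
  · simp only [hs, if_false]
    have hsum : ∑ m : ZMod N, eZ N (s * m) = ∑ i ∈ range N, (zet N ^ s.val) ^ i := by
      rw [Finset.sum_bij' (fun (m : ZMod N) (_ : m ∈ univ) => m.val)
        (fun (i : ℕ) (_ : i ∈ range N) => (i : ZMod N))]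
      · intro m _; exact Finset.mem_range.mpr (ZMod.val_lt m)
      · intro i _; exact Finset.mem_univ _
      · intro m _; exact ZMod.natCast_zmod_val m
      · intro i hi; exact ZMod.val_cast_of_lt (Finset.mem_range.mp hi)
      · intro m _; rw [eZ_mul, ← pow_mul]
    rw [hsum]
    have hne : zet N ^ s.val ≠ 1 := by
      intro h
      have hdvd := ((zet_prim (NeZero.ne N)).pow_eq_one_iff_dvd _).mp h
      have := Nat.le_of_dvd (Nat.pos_of_ne_zero (fun h => hs (by
        rwa [ZMod.val_eq_zero] at h))) hdvd
      exact absurd this (not_le.mpr (ZMod.val_lt s))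
    rw [geom_sum_eq hne, ← pow_mul, mul_comm s.val N, pow_mul, zet_pow_N (NeZero.ne N), one_pow,
      sub_self, zero_div]

lemma real_smul_diagonal {n : Type*} [DecidableEq n] (r : ℝ) (v : n → ℂ) :
    r • Matrix.diagonal v = Matrix.diagonal (fun j => (r : ℂ) * v j) := by
  ext i j
  by_cases h : i = j <;>
    simp [Matrix.diagonal_apply, h, Complex.real_smul]


/-- Proposition of Section III of the paper. For the partial Fourier matrix
`A` (rows of the DFT matrix `F` selected by the injective map `S`, with the zero frequency
sampled) and the circular Laplacian `Δ`, the matrix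
`Λ₂ = (AAᴴ)⁻¹ A ΔᴴΔ Aᴴ` equals `diag(d̂(S j)²)`, the matrix `AAᴴ + λ₂Λ₂` is invertible, and
`M_{λ₂} = λ₂ Λ₂ (AAᴴ + λ₂Λ₂)⁻¹` is diagonal with entries `λ₂ d̂(S j)² / (N + λ₂ d̂(S j)²)`. -/
theorem stmt18 {N L : ℕ} [NeZero N] (hN : 3 ≤ N)
    (S : Fin L → ZMod N) (hS : Function.Injective S) (hS0 : ∃ j : Fin L, S j = 0)
    (F : Matrix (ZMod N) (ZMod N) ℂ)
    (hF : ∀ j k : ZMod N,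
      F j k = Complex.exp (-2 * Real.pi * Complex.I * (j.val * k.val) / N))
    (A : Matrix (Fin L) (ZMod N) ℂ)
    (hA : ∀ (j : Fin L) (k : ZMod N), A j k = F (S j) k)
    (d : ZMod N → ℂ)
    (hd0 : d 0 = -2) (hd1 : d 1 = 1) (hdm1 : d (-1) = 1)
    (hd : ∀ k : ZMod N, k ≠ 0 → k ≠ 1 → k ≠ -1 → d k = 0)
    (Δ : Matrix (ZMod N) (ZMod N) ℂ) (hΔ : Δ = Matrix.circulant d)
    (dhat : ZMod N → ℂ) (hdhat : ∀ k : ZMod N, dhat k = F.mulVec d k)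
    (lam₂ : ℝ) (hlam₂ : 0 < lam₂)
    (Λ₂ : Matrix (Fin L) (Fin L) ℂ) (hΛ₂ : Λ₂ = (A * Aᴴ)⁻¹ * (A * Δᴴ * Δ * Aᴴ))
    (Mlam : Matrix (Fin L) (Fin L) ℂ)
    (hMlam : Mlam = lam₂ • Λ₂ * (A * Aᴴ + lam₂ • Λ₂)⁻¹) :
    Λ₂ = Matrix.diagonal (fun j : Fin L => (dhat (S j)) ^ 2) ∧
    IsUnit (A * Aᴴ + lam₂ • Λ₂) ∧
    Mlam = Matrix.diagonal
      (fun j : Fin L => (lam₂ : ℂ) * (dhat (S j)) ^ 2 / ((N : ℂ) + lam₂ * (dhat (S j)) ^ 2)) := by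
  have hN0 : (N : ℂ) ≠ 0 := Nat.cast_ne_zero.mpr (NeZero.ne N)
  haveI : Fact (1 < N) := ⟨by omega⟩
  -- F in terms of eZ
  have hFe : ∀ j k : ZMod N, F j k = eZ N (j * k) := by
    intro j k
    rw [hF, eZ_mul, eZ_exp]
    congr 1
    push_cast
    ring
  have hAe : ∀ (j : Fin L) (m : ZMod N), A j m = eZ N (S j * m) := by
    intro j m; rw [hA, hFe]
  have hAH : ∀ (m : ZMod N) (k : Fin L), Aᴴ m k = eZ N (-(S k * m)) := by
    intro m k
    rw [conjTranspose_apply, hAe, Complex.star_def, eZ_conj]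
  -- A Aᴴ = N • 1
  have hAAH : A * Aᴴ = (N : ℂ) • (1 : Matrix (Fin L) (Fin L) ℂ) := by
    ext j k
    rw [Matrix.mul_apply]
    have : ∀ m : ZMod N, A j m * Aᴴ m k = eZ N ((S j - S k) * m) := by
      intro m
      rw [hAe, hAH, ← eZ_add]
      congr 1
      ring
    rw [Finset.sum_congr rfl fun m _ => this m, eZ_sum]
    by_cases h : j = k
    · simp [h]
    · have hne : S j - S k ≠ 0 := sub_ne_zero.mpr fun hh => h (hS hh)
      simp [h, hne]
  -- dhat as a character sum
  have hdh2 : ∀ s : ZMod N, dhat s = ∑ t : ZMod N, eZ N (s * t) * d t := by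
    intro s
    rw [hdhat]
    simp [Matrix.mulVec, dotProduct, hFe]
  have h10 : (1 : ZMod N) ≠ 0 := one_ne_zero
  have hm10 : (-1 : ZMod N) ≠ 0 := neg_ne_zero.mpr one_ne_zero
  have h1m1 : (1 : ZMod N) ≠ -1 := by
    intro h
    have h2 : ((2 : ℕ) : ZMod N) = 0 := by
      push_cast
      linear_combination h
    rw [ZMod.natCast_eq_zero_iff] at h2
    have := Nat.le_of_dvd (by norm_num) h2
    omega
  have hdh : ∀ k : ZMod N, dhat k = -2 + eZ N k + eZ N (-k) := by
    intro k
    rw [hdh2 k]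
    have hsub : ∑ t : ZMod N, eZ N (k * t) * d t
        = ∑ t ∈ ({0, 1, -1} : Finset (ZMod N)), eZ N (k * t) * d t := by
      refine (Finset.sum_subset (Finset.subset_univ _) ?_).symm
      intro x _ hx
      simp only [Finset.mem_insert, Finset.mem_singleton, not_or] at hx
      rw [hd x hx.1 hx.2.1 hx.2.2, mul_zero]
    have hn1 : (0 : ZMod N) ∉ ({1, -1} : Finset (ZMod N)) := by
      simp [h10.symm, hm10.symm]
    have hn2 : (1 : ZMod N) ∉ ({-1} : Finset (ZMod N)) := by
      simp [h1m1]
    rw [hsub, Finset.sum_insert hn1, Finset.sum_insert hn2, Finset.sum_singleton,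
      mul_zero, eZ_zero, hd0, mul_one, hd1, mul_neg_one, hdm1]
    ring
  have hdreal : ∀ k : ZMod N, (starRingEnd ℂ) (dhat k) = dhat k := by
    intro k
    rw [hdh, map_add, map_add, eZ_conj, eZ_conj, neg_neg]
    have : (starRingEnd ℂ) (-2 : ℂ) = -2 := by
      rw [map_neg, map_ofNat]
    rw [this]
    ring
  -- Δ Aᴴ = Aᴴ D
  set D : Matrix (Fin L) (Fin L) ℂ := Matrix.diagonal (fun j => dhat (S j)) with hD
  have hΔAH : Δ * Aᴴ = Aᴴ * D := by
    ext m k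
    rw [hD, Matrix.mul_diagonal, Matrix.mul_apply, hΔ]
    calc ∑ n : ZMod N, circulant d m n * Aᴴ n k
        = ∑ t : ZMod N, circulant d m (m - t) * Aᴴ (m - t) k :=
          (Equiv.sum_comp (Equiv.subLeft m) fun n => circulant d m n * Aᴴ n k).symm
      _ = ∑ t : ZMod N, eZ N (S k * t) * d t * eZ N (-(S k * m)) := by
          refine Finset.sum_congr rfl fun t _ => ?_
          rw [circulant_apply, sub_sub_cancel, hAH,
            show (-(S k * (m - t))) = S k * t + -(S k * m) by ring, eZ_add]
          ring
      _ = dhat (S k) * eZ N (-(S k * m)) := by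
          rw [← Finset.sum_mul, ← hdh2]
      _ = Aᴴ m k * dhat (S k) := by rw [hAH]; ring
  have hDH : Dᴴ = D := by
    have hst : (star fun j : Fin L => dhat (S j)) = fun j : Fin L => dhat (S j) :=
      funext fun j => hdreal (S j)
    rw [hD, diagonal_conjTranspose, hst]
  have hADH : A * Δᴴ = D * A := by
    have h := congrArg conjTranspose hΔAH
    rw [conjTranspose_mul, conjTranspose_mul, conjTranspose_conjTranspose, hDH] at h
    exact h
  have hMid : A * Δᴴ * Δ * Aᴴ
      = (N : ℂ) • Matrix.diagonal (fun j : Fin L => (dhat (S j)) ^ 2) := by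
    calc A * Δᴴ * Δ * Aᴴ = (A * Δᴴ) * (Δ * Aᴴ) := Matrix.mul_assoc _ _ _
      _ = D * A * (Aᴴ * D) := by rw [hADH, hΔAH]
      _ = D * (A * Aᴴ) * D := by simp only [Matrix.mul_assoc]
      _ = (N : ℂ) • (D * D) := by
          rw [hAAH, mul_smul_comm, smul_mul_assoc, mul_one]
      _ = (N : ℂ) • Matrix.diagonal (fun j : Fin L => (dhat (S j)) ^ 2) := by
          rw [hD, diagonal_mul_diagonal]
          congr 1
          funext j
          ring
  have hInv : (A * Aᴴ)⁻¹ = (N : ℂ)⁻¹ • (1 : Matrix (Fin L) (Fin L) ℂ) := by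
    apply Matrix.inv_eq_left_inv
    rw [hAAH, smul_mul_assoc, one_mul, smul_smul, inv_mul_cancel₀ hN0, one_smul]
  have hΛ : Λ₂ = Matrix.diagonal (fun j : Fin L => (dhat (S j)) ^ 2) := by
    rw [hΛ₂, hInv, hMid, smul_mul_assoc, one_mul, smul_smul, inv_mul_cancel₀ hN0, one_smul]
  have hg0 : ∀ j : Fin L, (N : ℂ) + (lam₂ : ℂ) * (dhat (S j)) ^ 2 ≠ 0 := by
    intro j
    obtain ⟨r, hr⟩ := Complex.conj_eq_iff_real.mp (hdreal (S j))
    rw [hr]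
    have hNpos : (0 : ℝ) < N := by exact_mod_cast (by omega : 0 < N)
    have hpos : (0 : ℝ) < N + lam₂ * r ^ 2 := by positivity
    have h2 : ((N + lam₂ * r ^ 2 : ℝ) : ℂ) ≠ 0 := Complex.ofReal_ne_zero.mpr (ne_of_gt hpos)
    push_cast at h2
    exact h2
  have hone : (N : ℂ) • (1 : Matrix (Fin L) (Fin L) ℂ)
      = Matrix.diagonal (fun _ : Fin L => (N : ℂ)) := by
    ext i j
    by_cases h : i = j <;> simp [Matrix.one_apply, Matrix.diagonal_apply, h]
  have hSum : A * Aᴴ + lam₂ • Λ₂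
      = Matrix.diagonal (fun j : Fin L => (N : ℂ) + (lam₂ : ℂ) * (dhat (S j)) ^ 2) := by
    rw [hAAH, hΛ, real_smul_diagonal, hone, diagonal_add]
  have hunit : IsUnit (A * Aᴴ + lam₂ • Λ₂) := by
    rw [hSum, Matrix.isUnit_iff_isUnit_det, det_diagonal]
    exact isUnit_iff_ne_zero.mpr (Finset.prod_ne_zero_iff.mpr fun j _ => hg0 j)
  refine ⟨hΛ, hunit, ?_⟩
  have hinvd : (Matrix.diagonal (fun j : Fin L => (N : ℂ) + (lam₂ : ℂ) * (dhat (S j)) ^ 2))⁻¹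
      = Matrix.diagonal (fun j : Fin L => ((N : ℂ) + (lam₂ : ℂ) * (dhat (S j)) ^ 2)⁻¹) := by
    apply Matrix.inv_eq_right_inv
    rw [diagonal_mul_diagonal,
      show (fun j : Fin L => ((N : ℂ) + (lam₂ : ℂ) * (dhat (S j)) ^ 2)
          * ((N : ℂ) + (lam₂ : ℂ) * (dhat (S j)) ^ 2)⁻¹) = fun _ => (1 : ℂ)
        from funext fun j => mul_inv_cancel₀ (hg0 j), diagonal_one]
  rw [hMlam, hSum, hinvd, hΛ, real_smul_diagonal, diagonal_mul_diagonal]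
  exact congrArg Matrix.diagonal (funext fun j => (div_eq_mul_inv _ _).symm)
end
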